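/- arXiv:1901.04845 — 10 statements merged into one kernel-verified Lean document; each statement's English description precedes it below -/
import Mathlib

section
/- Let D be a finite digraph. If every nonempty induced subdigraph of D has a semi-kernel, then D has a kernel. -/
/-!
Induct on the vertex set `X`. Take a semi-kernel `S` of `D[X]` and let `R = unabsorbed A X S` be
the set of vertices of `X` that lie outside `S` and have no arc into `S`. Since `S` is nonempty,
`R` is a proper subset of `X`, so `D[R]` has a kernel `N`. Then `S ∪ N` is a kernel of `D[X]`: a
vertex of `N` has no arc into `S` by the choice of `R`, and no arc leaves `S` towards `N` because
the semi-kernel property would send such an arc back into `S`.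
-/

/-- A digraph on vertex type `V` is given by its arc relation `A`.
`S` is a semi-kernel of the subdigraph of `A` induced by `X`:
`S ⊆ X`, `S` is nonempty, independent, and whenever there is an arc from a
vertex of `S` to a vertex `z` of `X`, there is an arc from `z` back to `S`. -/
def IsSemiKernelIn {V : Type*} (A : V → V → Prop) (X S : Set V) : Prop :=
  S ⊆ X ∧ S.Nonempty ∧ (∀ x ∈ S, ∀ y ∈ S, ¬ A x y) ∧
    ∀ x ∈ S, ∀ z ∈ X, A x z → ∃ y ∈ S, A z y

/-- `N` is a kernel of the digraph with arc relation `A`: `N` is independent and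
every vertex outside `N` has an arc to some vertex of `N`. -/
def IsKernel {V : Type*} (A : V → V → Prop) (N : Set V) : Prop :=
  (∀ x ∈ N, ∀ y ∈ N, ¬ A x y) ∧ ∀ z, z ∉ N → ∃ y ∈ N, A z y

section Kernels

variable {V : Type*} (A : V → V → Prop)

def IsKernelIn (X N : Set V) : Prop :=
  N ⊆ X ∧ (∀ x ∈ N, ∀ y ∈ N, ¬ A x y) ∧ ∀ z ∈ X, z ∉ N → ∃ y ∈ N, A z y

def unabsorbed (X S : Set V) : Set V :=
  {z | z ∈ X ∧ z ∉ S ∧ ∀ y ∈ S, ¬ A z y}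

variable {A}

theorem isKernelIn_empty : IsKernelIn A ∅ ∅ := by
  simp [IsKernelIn]

theorem isKernelIn_univ_iff {N : Set V} : IsKernelIn A Set.univ N ↔ IsKernel A N := by
  simp [IsKernelIn, IsKernel]

theorem unabsorbed_subset (X S : Set V) : unabsorbed A X S ⊆ X :=
  fun _ hz ↦ hz.1

theorem unabsorbed_ssubset {X S : Set V} (hSX : S ⊆ X) (hS : S.Nonempty) :
    unabsorbed A X S ⊂ X := by
  obtain ⟨s, hs⟩ := hS
  exact (Set.ssubset_iff_of_subset (unabsorbed_subset X S)).2 ⟨s, hSX hs, fun h ↦ h.2.1 hs⟩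

theorem IsSemiKernelIn.union_isKernelIn {X S N : Set V} (hS : IsSemiKernelIn A X S)
    (hN : IsKernelIn A (unabsorbed A X S) N) : IsKernelIn A X (S ∪ N) := by
  obtain ⟨hSX, -, hSind, hSback⟩ := hS
  obtain ⟨hNR, hNind, hNabs⟩ := hN
  have hNX : N ⊆ X := hNR.trans (unabsorbed_subset X S)
  refine ⟨Set.union_subset hSX hNX, ?_, ?_⟩
  · rintro x (hxS | hxN) y (hyS | hyN) hxy
    · exact hSind x hxS y hyS hxy
    · obtain ⟨w, hwS, hyw⟩ := hSback x hxS y (hNX hyN) hxy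
      exact (hNR hyN).2.2 w hwS hyw
    · exact (hNR hxN).2.2 y hyS hxy
    · exact hNind x hxN y hyN hxy
  · intro z hzX hzSN
    by_cases hzS : ∃ y ∈ S, A z y
    · obtain ⟨y, hyS, hzy⟩ := hzS
      exact ⟨y, Or.inl hyS, hzy⟩
    · simp only [not_exists, not_and] at hzS
      obtain ⟨y, hyN, hzy⟩ :=
        hNabs z ⟨hzX, fun h ↦ hzSN (Or.inl h), hzS⟩ fun h ↦ hzSN (Or.inr h)
      exact ⟨y, Or.inr hyN, hzy⟩

theorem exists_isKernelIn [Finite V]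
    (h : ∀ X : Set V, X.Nonempty → ∃ S : Set V, IsSemiKernelIn A X S) (X : Set V) :
    ∃ N, IsKernelIn A X N := by
  induction X using WellFoundedLT.induction with
  | _ X ih =>
    rcases X.eq_empty_or_nonempty with rfl | hX
    · exact ⟨∅, isKernelIn_empty⟩
    obtain ⟨S, hS⟩ := h X hX
    obtain ⟨N, hN⟩ := ih _ (unabsorbed_ssubset hS.1 hS.2.1)
    exact ⟨S ∪ N, hS.union_isKernelIn hN⟩

end Kernels

theorem semiKernel_hereditary_implies_kernel {V : Type*} [Fintype V]
    (A : V → V → Prop)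
    (h : ∀ X : Set V, X.Nonempty → ∃ S : Set V, IsSemiKernelIn A X S) :
    ∃ N : Set V, IsKernel A N := by
  obtain ⟨N, hN⟩ := exists_isKernelIn h Set.univ
  exact ⟨N, isKernelIn_univ_iff.1 hN⟩
end

section
/- Let D₁, …, Dₙ be digraphs each having a Grundy function. Then the cartesian sum D₁ + D₂ + … + Dₙ also has a Grundy function; indeed, if gᵢ is a Grundy function of Dᵢ for each i, then the function sending (x₁,…,xₙ) to the digital sum (bitwise XOR) g₁(x₁) ⊕ g₂(x₂) ⊕ … ⊕ gₙ(xₙ) is a Grundy function of D₁ + … + Dₙ. -/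
/-- `g` is a Grundy function on the digraph with arc relation `A`. -/
def IsGrundy {V : Type*} (A : V → V → Prop) (g : V → ℕ) : Prop :=
  ∀ x, IsLeast {n : ℕ | ∀ y, A x y → g y ≠ n} (g x)

/-- Arc relation of the cartesian sum `D₁ + ⋯ + Dₙ` of the digraphs with arc
relations `A i`: there is an arc from `x` to `y` iff the tuples differ in exactly
one coordinate `j`, where `(x j, y j)` is an arc of `D j`. -/
def CartSumArc {n : ℕ} {V : Fin n → Type*} (A : ∀ i, V i → V i → Prop)
    (x y : ∀ i, V i) : Prop :=
  ∃ j, A j (x j) (y j) ∧ ∀ i, i ≠ j → x i = y i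

/-!
A move in the cartesian sum changes exactly one coordinate `x j` to an out-neighbour `y j`;
since `g j (y j) ≠ g j (x j)` and xor is cancellative, the nim-sum changes. Conversely, for
`m` below the nim-sum `s`, Bouton's analysis of Nim (`Nat.lt_xor_cases`, applied along the
list) finds a summand `a = g j (x j)` with `a ^^^ s ^^^ m < a`; the Grundy property of `D j`
gives a move in `D j` to that value, and the resulting position has nim-sum `m`.
-/

theorem List.ofFn_update {α : Type*} {n : ℕ} (f : Fin n → α) (j : Fin n) (v : α) :
    List.ofFn (Function.update f j v) = (List.ofFn f).set j v := by
  refine List.ext_getElem (by simp) fun i h₁ h₂ => ?_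
  simp [List.getElem_set, Function.update_apply, Fin.ext_iff, eq_comm]

section LawfulXor

variable {α : Type*} [XorOp α] [Zero α] [LawfulXor α]

theorem List.foldr_xor_set (l : List α) {j : ℕ} (hj : j < l.length) (v : α) :
    (l.set j v).foldr (· ^^^ ·) 0 = l.foldr (· ^^^ ·) 0 ^^^ l[j] ^^^ v := by
  induction l generalizing j with
  | nil => simp at hj
  | cons a l ih =>
    cases j with
    | zero =>
      simp only [List.set_cons_zero, List.foldr_cons, List.getElem_cons_zero]
      rw [xor_comm a, xor_cancel_right, xor_comm v]
    | succ j =>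
      simp only [List.set_cons_succ, List.foldr_cons, List.getElem_cons_succ,
        ih (by simpa using hj), xor_assoc]

theorem List.foldr_xor_set_ne (l : List α) {j : ℕ} (hj : j < l.length) {v : α} (hv : v ≠ l[j]) :
    (l.set j v).foldr (· ^^^ ·) 0 ≠ l.foldr (· ^^^ ·) 0 := by
  rw [List.foldr_xor_set l hj, xor_assoc, Ne, xor_left_eq_self_iff, xor_eq_zero_iff]
  exact hv.symm

end LawfulXor

theorem List.exists_set_foldr_xor_eq_of_lt {m : ℕ} :
    ∀ {l : List ℕ}, m < l.foldr (· ^^^ ·) 0 →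
      ∃ (j : ℕ) (hj : j < l.length) (v : ℕ), v < l[j] ∧ (l.set j v).foldr (· ^^^ ·) 0 = m
  | [], h => by simp at h
  | a :: l, h => by
    rw [List.foldr_cons] at h
    rcases Nat.lt_xor_cases h with h | h
    · exact ⟨0, by simp, _, h, by simp⟩
    · obtain ⟨j, hj, v, hv, hset⟩ := List.exists_set_foldr_xor_eq_of_lt h
      exact ⟨j + 1, by simpa using hj, v, hv, by simp [hset]⟩

namespace IsGrundy

variable {V : Type*} {A : V → V → Prop} {g : V → ℕ}

theorem ne_of_arc (hg : IsGrundy A g) {x y : V} (hxy : A x y) : g y ≠ g x :=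
  (hg x).1 y hxy

theorem exists_arc_of_lt (hg : IsGrundy A g) {x : V} {m : ℕ} (hm : m < g x) :
    ∃ y, A x y ∧ g y = m := by
  by_contra! h
  exact (hm.trans_le ((hg x).2 h)).false

end IsGrundy

theorem cartSumArc_iff {n : ℕ} {V : Fin n → Type*} {A : ∀ i, V i → V i → Prop}
    {x y : ∀ i, V i} :
    CartSumArc A x y ↔ ∃ j yj, A j (x j) yj ∧ y = Function.update x j yj := by
  constructor
  · rintro ⟨j, hA, heq⟩
    refine ⟨j, y j, hA, funext fun i => ?_⟩
    rcases eq_or_ne i j with rfl | hij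
    · simp
    · simp [hij, heq i hij]
  · rintro ⟨j, yj, hA, rfl⟩
    exact ⟨j, by simpa using hA, fun i hij => by simp [hij]⟩

theorem cartSum_grundy_xor {n : ℕ} {V : Fin n → Type*}
    (A : ∀ i, V i → V i → Prop) (g : ∀ i, V i → ℕ)
    (hg : ∀ i, IsGrundy (A i) (g i)) :
    IsGrundy (CartSumArc A)
      (fun x => (List.ofFn (fun i => g i (x i))).foldr (· ^^^ ·) 0) := by
  have value_update (x : ∀ i, V i) (j : Fin n) (yj : V j) :
      List.ofFn (fun i => g i (Function.update x j yj i))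
        = (List.ofFn fun i => g i (x i)).set j (g j yj) := by
    rw [← List.ofFn_update]
    exact congrArg _ (funext fun i => Function.apply_update g x j yj i)
  intro x
  refine ⟨fun y hxy => ?_, fun m hm => ?_⟩
  · obtain ⟨j, yj, hA, rfl⟩ := cartSumArc_iff.1 hxy
    simp only [value_update]
    exact List.foldr_xor_set_ne _ (by simp) (by simpa using (hg j).ne_of_arc hA)
  · by_contra! hlt
    obtain ⟨j, hj, v, hv, hset⟩ := List.exists_set_foldr_xor_eq_of_lt hlt
    rw [List.length_ofFn] at hj
    obtain ⟨yj, hA, rfl⟩ := (hg ⟨j, hj⟩).exists_arc_of_lt (by simpa using hv)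
    exact hm _ (cartSumArc_iff.2 ⟨_, yj, hA, rfl⟩) (by simpa [value_update] using hset)
end

section
/- Let D be a digraph with nonempty vertex set. If s is a semi-Grundy function on D and m₀ = min{s(x) : x ∈ V(D)}, then the set S = s⁻¹(m₀) is a semi-kernel of D. In particular, if D has a semi-Grundy function then D has a semi-kernel. -/
/-- `s` is a semi-Grundy function on the digraph with arc relation `A`. -/
def IsSemiGrundy {V : Type*} (A : V → V → Prop) (s : V → ℕ) : Prop :=
  (∀ x y, A x y → s y ≠ s x) ∧
    (∀ x y, A x y → s x < s y → ∃ z, A y z ∧ s z = s x)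

/-- `S` is a semi-kernel of the digraph with arc relation `A`: `S` is nonempty,
independent, and whenever there is an arc from a vertex of `S` to a vertex `z`,
there is an arc from `z` back to some vertex of `S`. -/
def IsSemiKernel {V : Type*} (A : V → V → Prop) (S : Set V) : Prop :=
  S.Nonempty ∧ (∀ x ∈ S, ∀ y ∈ S, ¬ A x y) ∧
    ∀ x ∈ S, ∀ z, A x z → ∃ y ∈ S, A z y

namespace IsSemiGrundy

variable {V : Type*} {A : V → V → Prop} {s : V → ℕ}

theorem not_adj_of_eq (hs : IsSemiGrundy A s) {x y : V} (hxy : s x = s y) : ¬ A x y :=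
  fun hA => hs.1 x y hA hxy.symm

theorem exists_adj_eq_of_forall_le (hs : IsSemiGrundy A s) {x z : V} (hmin : ∀ v, s x ≤ s v)
    (hxz : A x z) : ∃ y, A z y ∧ s y = s x :=
  hs.2 x z hxz <| lt_of_le_of_ne (hmin z) (hs.1 x z hxz).symm

theorem isSemiKernel_level_of_forall_le (hs : IsSemiGrundy A s) {m : ℕ} (hm : ∀ v, m ≤ s v)
    (hne : ∃ x, s x = m) : IsSemiKernel A {x | s x = m} := by
  refine ⟨hne, fun x hx y hy => hs.not_adj_of_eq (hx.trans hy.symm), fun x hx z hxz => ?_⟩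
  obtain ⟨y, hzy, hy⟩ := hs.exists_adj_eq_of_forall_le (fun v => hx ▸ hm v) hxz
  exact ⟨y, hy.trans hx, hzy⟩

end IsSemiGrundy

theorem semiGrundy_min_level_is_semiKernel {V : Type*} [Nonempty V]
    (A : V → V → Prop) (s : V → ℕ) (hs : IsSemiGrundy A s) :
    IsSemiKernel A {x | s x = sInf (Set.range s)} :=
  hs.isSemiKernel_level_of_forall_le (fun v => Nat.sInf_le ⟨v, rfl⟩)
    (Nat.sInf_mem (Set.range_nonempty s))
end

section
/- Let D be a finite digraph. If every nonempty induced subdigraph of D has a semi-kernel, then D has a semi-Grundy function. -/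
def IsSemiGrundyOn {V : Type*} (A : V → V → Prop) (X : Set V) (s : V → ℕ) : Prop :=
  (∀ x ∈ X, ∀ y ∈ X, A x y → s y ≠ s x) ∧
    ∀ x ∈ X, ∀ y ∈ X, A x y → s x < s y → ∃ z ∈ X, A y z ∧ s z = s x

theorem isSemiGrundyOn_univ_iff {V : Type*} {A : V → V → Prop} {s : V → ℕ} :
    IsSemiGrundyOn A Set.univ s ↔ IsSemiGrundy A s := by
  simp [IsSemiGrundyOn, IsSemiGrundy]

open Classical in
theorem IsSemiKernelIn.isSemiGrundyOn_extend {V : Type*} {A : V → V → Prop} {X S : Set V}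
    (hS : IsSemiKernelIn A X S) {s : V → ℕ} (hs : IsSemiGrundyOn A (X \ S) s) :
    IsSemiGrundyOn A X (fun v => if v ∈ S then 0 else s v + 1) := by
  obtain ⟨hSX, -, hind, habsorb⟩ := hS
  obtain ⟨hproper, hsemi⟩ := hs
  constructor
  · intro x hx y hy hxy
    by_cases hxS : x ∈ S <;> by_cases hyS : y ∈ S <;> simp only [hxS, hyS, if_true, if_false]
    · exact absurd hxy (hind x hxS y hyS)
    · omega
    · omega
    · simpa using hproper x ⟨hx, hxS⟩ y ⟨hy, hyS⟩ hxy
  · intro x hx y hy hxy hlt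
    by_cases hxS : x ∈ S
    · obtain ⟨z, hzS, hyz⟩ := habsorb x hxS y hy hxy
      exact ⟨z, hSX hzS, hyz, by simp [hxS, hzS]⟩
    · have hyS : y ∉ S := by
        intro hyS
        simp [hxS, hyS] at hlt
      simp only [hxS, hyS, if_false] at hlt
      obtain ⟨z, ⟨hzX, hzS⟩, hyz, hzx⟩ := 
        hsemi x ⟨hx, hxS⟩ y ⟨hy, hyS⟩ hxy (by omega)
      exact ⟨z, hzX, hyz, by simp [hxS, hzS, hzx]⟩

theorem exists_isSemiGrundyOn_of_hereditary_semiKernel {V : Type*} [Finite V]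
    (A : V → V → Prop) (X : Set V)
    (h : ∀ Y ⊆ X, Y.Nonempty → ∃ S, IsSemiKernelIn A Y S) :
    ∃ s, IsSemiGrundyOn A X s := by
  induction X using WellFoundedLT.induction with
  | _ X ih =>
  rcases X.eq_empty_or_nonempty with rfl | hX
  · exact ⟨0, by simp [IsSemiGrundyOn]⟩
  obtain ⟨S, hS⟩ := h X le_rfl hX
  have hlt : X \ S ⊂ X := by
    rw [Set.sdiff_ssubset_left_iff, Set.inter_eq_right.mpr hS.1]
    exact hS.2.1
  obtain ⟨s, hs⟩ := ih _ hlt fun Y hY => h Y (hY.trans Set.sdiff_subset)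
  exact ⟨_, hS.isSemiGrundyOn_extend hs⟩

theorem semiKernel_hereditary_implies_semiGrundy {V : Type*} [Fintype V]
    (A : V → V → Prop)
    (h : ∀ X : Set V, X.Nonempty → ∃ S : Set V, IsSemiKernelIn A X S) :
    ∃ s : V → ℕ, IsSemiGrundy A s := by
  obtain ⟨s, hs⟩ := exists_isSemiGrundyOn_of_hereditary_semiKernel A Set.univ fun Y _ => h Y
  exact ⟨s, isSemiGrundyOn_univ_iff.mp hs⟩
end

section
/- Let D be a digraph with nonempty vertex set and α = (α_v)_{v ∈ V(D)} a family of mutually disjoint digraphs with nonempty vertex sets. If the cartesian product σ(D,α) has a semi-Grundy function, then D has a semi-kernel; explicitly, if S is a semi-Grundy function of σ(D,α) with minimum value 0, then A = {u ∈ V(D) : V(α_u) ∩ S⁻¹(0) ≠ ∅} is a semi-kernel of D. -/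
/-- Arc relation of the cartesian product `σ(D,α)`. -/
inductive SigmaArc {U : Type*} {W : U → Type*} (AD : U → U → Prop)
    (Aα : ∀ u, W u → W u → Prop) : (Σ u, W u) → (Σ u, W u) → Prop
  | inner (u : U) (x y : W u) : Aα u x y → SigmaArc AD Aα ⟨u, x⟩ ⟨u, y⟩
  | cross (u v : U) (x : W u) (y : W v) : AD u v → SigmaArc AD Aα ⟨u, x⟩ ⟨v, y⟩

theorem IsSemiGrundy.isSemiKernel_preimage_zero {V : Type*} {A : V → V → Prop} {s : V → ℕ}
    (hs : IsSemiGrundy A s) (h0 : ∃ x, s x = 0) : IsSemiKernel A (s ⁻¹' {0}) := by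
  obtain ⟨hne, hret⟩ := hs
  refine ⟨h0, fun x hx y hy hxy => hne x y hxy (hy.trans hx.symm), fun x hx z hxz => ?_⟩
  have hx : s x = 0 := hx
  have hz : s x < s z := hx ▸ Nat.pos_of_ne_zero (hx ▸ hne x z hxz)
  obtain ⟨y, hzy, hy⟩ := hret x z hxz hz
  exact ⟨y, hy.trans hx, hzy⟩

theorem IsSemiKernel.image_sigma_fst {U : Type*} {W : U → Type*} [∀ u, Nonempty (W u)]
    {AD : U → U → Prop} {Aα : ∀ u, W u → W u → Prop} {K : Set (Σ u, W u)}
    (hK : IsSemiKernel (SigmaArc AD Aα) K) : IsSemiKernel AD (Sigma.fst '' K) := by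
  obtain ⟨hne, hind, habs⟩ := hK
  refine ⟨hne.image _, ?_, ?_⟩
  · rintro _ ⟨⟨u, w⟩, hw, rfl⟩ _ ⟨⟨v, w'⟩, hw', rfl⟩ huv
    exact hind _ hw _ hw' (.cross u v w w' huv)
  · rintro _ ⟨⟨u, w⟩, hw, rfl⟩ z huz
    obtain ⟨y⟩ : Nonempty (W z) := inferInstance
    obtain ⟨k, hk, hzk⟩ := habs _ hw ⟨z, y⟩ (.cross u z w y huz)
    cases hzk with
    | inner _ _ y' _ => exact (hind _ hw _ hk (.cross u z w y' huz)).elim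
    | cross _ v _ y' hzv => exact ⟨v, ⟨_, hk, rfl⟩, hzv⟩

theorem cartProd_semiGrundy_gives_semiKernel_general {U : Type*}
    {W : U → Type*} [∀ u, Nonempty (W u)]
    (AD : U → U → Prop) (Aα : ∀ u, W u → W u → Prop)
    (S : (Σ u, W u) → ℕ) (hS : IsSemiGrundy (SigmaArc AD Aα) S)
    (h0 : ∃ x : Σ u, W u, S x = 0) :
    IsSemiKernel AD {u : U | ∃ w : W u, S ⟨u, w⟩ = 0} := by
  have hfibres : {u : U | ∃ w : W u, S ⟨u, w⟩ = 0} = Sigma.fst '' (S ⁻¹' {0}) := by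
    ext u
    exact ⟨fun ⟨w, hw⟩ => ⟨⟨u, w⟩, hw, rfl⟩, fun ⟨⟨_, w⟩, hw, hu⟩ => hu ▸ ⟨w, hw⟩⟩
  rw [hfibres]
  exact (hS.isSemiKernel_preimage_zero h0).image_sigma_fst

theorem cartProd_semiGrundy_gives_semiKernel {U : Type*} [Nonempty U]
    {W : U → Type*} [∀ u, Nonempty (W u)]
    (AD : U → U → Prop) (Aα : ∀ u, W u → W u → Prop)
    (S : (Σ u, W u) → ℕ) (hS : IsSemiGrundy (SigmaArc AD Aα) S)
    (h0 : ∃ x : Σ u, W u, S x = 0) :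
    IsSemiKernel AD {u : U | ∃ w : W u, S ⟨u, w⟩ = 0} :=
  cartProd_semiGrundy_gives_semiKernel_general AD Aα S hS h0
end

section
/- Let D be a digraph and α = (α_v)_{v ∈ V(D)} a family of mutually disjoint digraphs. If the cartesian product σ(D,α) has a semi-Grundy function S, then for every u ∈ V(D) the digraph α_u has a semi-Grundy function; indeed the restriction of S to V(α_u) (suitably renumbered so that its values are consecutive integers starting at 0) is a semi-Grundy function of α_u. -/
/-! Properness is inherited by the restriction. The witness `z` that `S` provides for an arc
`x → y` of `α u` cannot leave the fibre of `u`: an out-neighbour of `y` outside that fibre is an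
out-neighbour of `x` as well, so its value differs from `S x`. -/

theorem IsSemiGrundy.comp {V V' : Type*} {A : V → V → Prop} {A' : V' → V' → Prop} {s : V → ℕ}
    (hs : IsSemiGrundy A s) (f : V' → V) (hf : ∀ x y, A' x y → A (f x) (f y))
    (hlift : ∀ x y z, A' x y → A (f y) z → s z = s (f x) → ∃ z', A' y z' ∧ f z' = z) :
    IsSemiGrundy A' (s ∘ f) := by
  refine ⟨fun x y hxy => hs.1 _ _ (hf x y hxy), fun x y hxy hlt => ?_⟩
  obtain ⟨z, hyz, hz⟩ := hs.2 _ _ (hf x y hxy) hlt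
  obtain ⟨z', hyz', rfl⟩ := hlift x y z hxy hyz hz
  exact ⟨z', hyz', hz⟩

theorem SigmaArc.inner_or_forall_cross {U : Type*} {W : U → Type*} {AD : U → U → Prop}
    {Aα : ∀ u, W u → W u → Prop} {u : U} {y : W u} {z : Σ u, W u}
    (h : SigmaArc AD Aα ⟨u, y⟩ z) :
    (∃ z', Aα u y z' ∧ Sigma.mk u z' = z) ∨ ∀ x : W u, SigmaArc AD Aα ⟨u, x⟩ z := by
  cases h with
  | inner _ _ z' hyz => exact Or.inl ⟨z', hyz, rfl⟩
  | cross _ v _ z' huv => exact Or.inr fun x => .cross u v x z' huv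

/-- If the cartesian product `σ(D,α)` has a semi-Grundy function `S`, then every
factor `α u` has a semi-Grundy function; indeed the restriction of `S` to
`V(α u)` is one (it is semi-Grundy, hence so is any renumbering of it with
consecutive values starting at `0`). -/
theorem cartProd_semiGrundy_restricts {U : Type*} {W : U → Type*}
    (AD : U → U → Prop) (Aα : ∀ u, W u → W u → Prop)
    (S : (Σ u, W u) → ℕ) (hS : IsSemiGrundy (SigmaArc AD Aα) S) :
    ∀ u : U, IsSemiGrundy (Aα u) (fun x : W u => S ⟨u, x⟩) := by
  intro u
  refine hS.comp (Sigma.mk u) (fun x y => .inner u x y) fun x y z _ hyz hz => ?_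
  rcases hyz.inner_or_forall_cross with hinner | hcross
  · exact hinner
  · exact absurd hz (hS.1 _ _ (hcross x))
end

section
/- For every natural number n ≥ 1 there exists a finite digraph D with two Grundy functions f and g such that max{f(x) : x ∈ V(D)} − max{g(x) : x ∈ V(D)} = n. -/
theorem isGrundy_iff {V : Type*} {A : V → V → Prop} {g : V → ℕ} :
    IsGrundy A g ↔ ∀ x, (∀ y, A x y → g y ≠ g x) ∧ ∀ m < g x, ∃ y, A x y ∧ g y = m := by
  simp only [IsGrundy, IsLeast, lowerBounds, Set.mem_ofPred_eq]
  refine forall_congr' fun x => and_congr_right' ⟨fun h m hm => ?_, fun h m hm => ?_⟩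
  · by_contra! hmiss
    exact (h hmiss).not_gt hm
  · by_contra! hlt
    obtain ⟨y, hy, rfl⟩ := h m hlt
    exact hm y hy rfl

theorem IsGrundy.comp_equiv {V W : Type*} {A : V → V → Prop} {g : V → ℕ} (h : IsGrundy A g)
    (e : W ≃ V) : IsGrundy (fun x y => A (e x) (e y)) (g ∘ e) := by
  rw [isGrundy_iff] at h ⊢
  refine fun x => ⟨fun y hy => (h (e x)).1 (e y) hy, fun m hm => ?_⟩
  obtain ⟨y, hy, rfl⟩ := (h (e x)).2 m hm
  exact ⟨e.symm y, by simpa using hy, by simp⟩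

theorem Finset.sup_univ_comp_equiv {α β γ : Type*} [Fintype α] [Fintype β]
    [SemilatticeSup γ] [OrderBot γ] (e : α ≃ β) (f : β → γ) :
    univ.sup (f ∘ e) = univ.sup f := by
  rw [← univ_map_equiv_to_embedding e, sup_map]
  rfl

theorem Fin.sup_univ_val (n : ℕ) : Finset.univ.sup (fun i : Fin (n + 1) => (i : ℕ)) = n :=
  le_antisymm (Finset.sup_le fun i _ => Nat.lt_succ_iff.mp i.isLt)
    (Finset.le_sup_of_le (Finset.mem_univ (Fin.last n)) le_rfl)

namespace GrundyGap

def arc (m : ℕ) : Fin m ⊕ Fin m → Fin m ⊕ Fin m → Prop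
  | .inl i, .inr j => j < i ∨ ((i : ℕ) = 0 ∧ (j : ℕ) = 1)
  | .inr i, .inl j => j < i
  | _, _ => False

def level (m : ℕ) : Fin m ⊕ Fin m → ℕ :=
  Sum.elim Fin.val Fin.val

def side (m : ℕ) : Fin m ⊕ Fin m → ℕ :=
  Sum.elim 1 0

theorem isGrundy_level (m : ℕ) : IsGrundy (arc m) (level m) := by
  rw [isGrundy_iff]
  rintro (i | i)
  · refine ⟨?_, fun k hk => ⟨.inr ⟨k, hk.trans i.isLt⟩, Or.inl hk, rfl⟩⟩
    rintro (j | j) hj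
    · exact hj.elim
    · simp only [arc, level, Sum.elim_inr, Sum.elim_inl] at hj ⊢
      omega
  · refine ⟨?_, fun k hk => ⟨.inl ⟨k, hk.trans i.isLt⟩, hk, rfl⟩⟩
    rintro (j | j) hj
    · simp only [arc, level, Sum.elim_inl, Sum.elim_inr] at hj ⊢
      omega
    · exact hj.elim

theorem isGrundy_side {m : ℕ} (hm : 2 ≤ m) : IsGrundy (arc m) (side m) := by
  rw [isGrundy_iff]
  rintro (i | i)
  · refine ⟨?_, fun k hk => ?_⟩
    · rintro (j | j) hj
      · exact hj.elim
      · simp [side]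
    obtain rfl : k = 0 := Nat.lt_one_iff.mp hk
    by_cases hi : (i : ℕ) = 0
    · exact ⟨.inr ⟨1, hm⟩, Or.inr ⟨hi, rfl⟩, rfl⟩
    · exact ⟨.inr ⟨0, by omega⟩, Or.inl (Nat.pos_of_ne_zero hi), rfl⟩
  · refine ⟨?_, fun k hk => absurd hk k.not_lt_zero⟩
    rintro (j | j) hj
    · simp [side]
    · exact hj.elim

theorem sup_level (n : ℕ) : Finset.univ.sup (level (n + 1)) = n := by
  rw [← Finset.univ_disjSum_univ, Finset.sup_disjSum]
  simp only [level, Sum.elim_inl, Sum.elim_inr, Fin.sup_univ_val, max_self]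

theorem sup_side (n : ℕ) : Finset.univ.sup (side (n + 1)) = 1 := by
  rw [← Finset.univ_disjSum_univ, Finset.sup_disjSum]
  simp only [side, Sum.elim_inl, Sum.elim_inr, Pi.one_apply, Pi.zero_apply,
    Finset.sup_const Finset.univ_nonempty]
  rfl

end GrundyGap

theorem exists_digraph_grundy_gap_general (n : ℕ) :
    ∃ (k : ℕ) (A : Fin k → Fin k → Prop) (f g : Fin k → ℕ),
      IsGrundy A f ∧ IsGrundy A g ∧
        Finset.univ.sup f - Finset.univ.sup g = n := by
  let e : Fin ((n + 2) + (n + 2)) ≃ Fin (n + 2) ⊕ Fin (n + 2) := finSumFinEquiv.symm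
  refine ⟨_, fun x y => GrundyGap.arc (n + 2) (e x) (e y), GrundyGap.level (n + 2) ∘ e,
    GrundyGap.side (n + 2) ∘ e, (GrundyGap.isGrundy_level _).comp_equiv e,
    (GrundyGap.isGrundy_side le_add_self).comp_equiv e, ?_⟩
  rw [Finset.sup_univ_comp_equiv, Finset.sup_univ_comp_equiv, GrundyGap.sup_level,
    GrundyGap.sup_side]
  rfl

theorem exists_digraph_grundy_gap (n : ℕ) (hn : 1 ≤ n) :
    ∃ (k : ℕ) (A : Fin k → Fin k → Prop) (f g : Fin k → ℕ),
      IsGrundy A f ∧ IsGrundy A g ∧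
        Finset.univ.sup f - Finset.univ.sup g = n :=
  exists_digraph_grundy_gap_general n
end

section
/- There exists a finite digraph that has a semi-Grundy function but has no Grundy function. -/
/-!
The digraph has a directed triangle `0 → 1 → 2 → 0` whose vertices also point to the sinks `3`
and `4`. A Grundy function vanishes on the sinks, so on the triangle it is nonzero, and it is at
most the out-degree `2`; it would therefore properly 2-colour an odd cycle. A semi-Grundy function
is not bounded by the out-degree: `![1, 3, 2, 1, 0]` escapes by giving vertex `1` the value `3`.
-/

namespace IsGrundy

variable {V : Type*} {A : V → V → Prop} {g : V → ℕ}

theorem apply_ne_of_adj (hg : IsGrundy A g) {x y : V} (h : A x y) : g y ≠ g x :=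
  (hg x).1 y h

theorem apply_eq_zero_of_forall_not_adj (hg : IsGrundy A g) {x : V} (hx : ∀ y, ¬ A x y) :
    g x = 0 :=
  Nat.le_zero.mp <| (hg x).2 fun y hy => absurd hy (hx y)

theorem apply_le_card_of_forall_adj_mem (hg : IsGrundy A g) {x : V} {s : Finset V}
    (hs : ∀ y, A x y → y ∈ s) : g x ≤ s.card := by
  classical
  have hcard : (s.image g).card < (Finset.range (s.card + 1)).card := by
    rw [Finset.card_range]
    exact Nat.lt_succ_of_le Finset.card_image_le
  obtain ⟨n, hn, hn_notMem⟩ := Finset.exists_mem_notMem_of_card_lt_card hcard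
  calc g x ≤ n := (hg x).2 fun y hy hgy => hn_notMem (hgy ▸ Finset.mem_image_of_mem g (hs y hy))
    _ ≤ s.card := Nat.lt_succ_iff.mp (Finset.mem_range.mp hn)

end IsGrundy

def triangleWithSinks (x y : Fin 5) : Prop :=
  (x.1, y.1) ∈ [(0, 1), (0, 4), (1, 2), (1, 3), (2, 0), (2, 3)]

instance : DecidableRel triangleWithSinks := fun x y =>
  inferInstanceAs (Decidable ((x.1, y.1) ∈ _))

theorem isSemiGrundy_triangleWithSinks : IsSemiGrundy triangleWithSinks ![1, 3, 2, 1, 0] := by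
  unfold IsSemiGrundy
  decide

theorem not_isGrundy_triangleWithSinks (g : Fin 5 → ℕ) : ¬ IsGrundy triangleWithSinks g := by
  intro hg
  have sink3 : g 3 = 0 := hg.apply_eq_zero_of_forall_not_adj (by decide)
  have sink4 : g 4 = 0 := hg.apply_eq_zero_of_forall_not_adj (by decide)
  have h04 := hg.apply_ne_of_adj (x := 0) (y := 4) (by decide)
  have h13 := hg.apply_ne_of_adj (x := 1) (y := 3) (by decide)
  have h23 := hg.apply_ne_of_adj (x := 2) (y := 3) (by decide)
  have h01 := hg.apply_ne_of_adj (x := 0) (y := 1) (by decide)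
  have h12 := hg.apply_ne_of_adj (x := 1) (y := 2) (by decide)
  have h20 := hg.apply_ne_of_adj (x := 2) (y := 0) (by decide)
  have le0 : g 0 ≤ 2 := hg.apply_le_card_of_forall_adj_mem (s := {1, 4}) (by decide)
  have le1 : g 1 ≤ 2 := hg.apply_le_card_of_forall_adj_mem (s := {2, 3}) (by decide)
  have le2 : g 2 ≤ 2 := hg.apply_le_card_of_forall_adj_mem (s := {0, 3}) (by decide)
  omega

theorem exists_digraph_semiGrundy_no_grundy :
    ∃ (k : ℕ) (A : Fin k → Fin k → Prop),
      (∃ s : Fin k → ℕ, IsSemiGrundy A s) ∧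
        ∀ g : Fin k → ℕ, ¬ IsGrundy A g :=
  ⟨5, triangleWithSinks, ⟨_, isSemiGrundy_triangleWithSinks⟩, not_isGrundy_triangleWithSinks⟩
end

section
/- There exists a finite digraph that has a semi-Grundy function but has no kernel. -/
/-!
In the digraph with arcs 0 → 1, 1 → 2, 2 → 0, 2 → 3, 3 → 0, 3 → 4, vertex 4 is a sink, so it lies
in every kernel and its in-neighbour 3 does not. Every other out-neighbour of a vertex of the
directed triangle 0 → 1 → 2 → 0 is then outside the kernel, so kernel membership has to alternate
around the triangle, which is impossible on a cycle of odd length. The semi-Grundy function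
`![2, 1, 3, 1, 0]` is checked directly.
-/

namespace IsKernel

variable {V : Type*} {A : V → V → Prop} {N : Set V} {x y : V}

theorem mem_of_forall_not_arc (hN : IsKernel A N) (hx : ∀ z, ¬ A x z) : x ∈ N := by
  by_contra hxN
  obtain ⟨z, -, hxz⟩ := hN.2 x hxN
  exact hx z hxz

theorem not_mem_of_arc (hN : IsKernel A N) (hxy : A x y) (hy : y ∈ N) : x ∉ N :=
  fun hx => hN.1 x hx y hy hxy

theorem mem_iff_not_mem_of_arc (hN : IsKernel A N) (hxy : A x y)
    (hx : ∀ z, A x z → z = y ∨ z ∉ N) : x ∈ N ↔ y ∉ N := by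
  refine ⟨fun hxN hyN => hN.not_mem_of_arc hxy hyN hxN, fun hyN => ?_⟩
  by_contra hxN
  obtain ⟨z, hzN, hxz⟩ := hN.2 x hxN
  rcases hx z hxz with rfl | hz
  · exact hyN hzN
  · exact hz hzN

end IsKernel

def exampleArc : Fin 5 → Fin 5 → Prop := fun x y =>
  (x, y) ∈ ([(0, 1), (1, 2), (2, 0), (2, 3), (3, 0), (3, 4)] : List (Fin 5 × Fin 5))

instance : DecidableRel exampleArc := fun x y => by unfold exampleArc; infer_instance

theorem isSemiGrundy_exampleArc : IsSemiGrundy exampleArc ![2, 1, 3, 1, 0] := by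
  unfold IsSemiGrundy
  decide

theorem not_isKernel_exampleArc (N : Set (Fin 5)) : ¬ IsKernel exampleArc N := by
  intro hN
  have h4 : (4 : Fin 5) ∈ N := hN.mem_of_forall_not_arc (by decide)
  have h3 : (3 : Fin 5) ∉ N := hN.not_mem_of_arc (by decide) h4
  have h01 : (0 : Fin 5) ∈ N ↔ (1 : Fin 5) ∉ N :=
    hN.mem_iff_not_mem_of_arc (by decide) fun z hz => .inl (by revert z; decide)
  have h12 : (1 : Fin 5) ∈ N ↔ (2 : Fin 5) ∉ N :=
    hN.mem_iff_not_mem_of_arc (by decide) fun z hz => .inl (by revert z; decide)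
  have h20 : (2 : Fin 5) ∈ N ↔ (0 : Fin 5) ∉ N :=
    hN.mem_iff_not_mem_of_arc (by decide) fun z hz => by
      obtain rfl | rfl : z = 0 ∨ z = 3 := by revert z; decide
      exacts [.inl rfl, .inr h3]
  tauto

theorem exists_digraph_semiGrundy_no_kernel :
    ∃ (k : ℕ) (A : Fin k → Fin k → Prop),
      (∃ s : Fin k → ℕ, IsSemiGrundy A s) ∧
        ∀ N : Set (Fin k), ¬ IsKernel A N :=
  ⟨5, exampleArc, ⟨_, isSemiGrundy_exampleArc⟩, not_isKernel_exampleArc⟩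
end

section
/- There exists a finite digraph that has a semi-kernel but has no semi-Grundy function. -/
/-!
A sink is a semi-kernel on its own, while a directed odd cycle admits no semi-Grundy function:
at a vertex `y` of minimal value on the cycle the arc `y → f y` goes up, which forces
`s (f (f y)) = s y`. Hence `s` is minimal at every second vertex of the cycle, and since the
cycle is odd this includes `f y`, contradicting `s (f y) ≠ s y`. A sink next to a directed
triangle is therefore an example.
-/

open Function Set

theorem isSemiKernel_singleton {V : Type*} {A : V → V → Prop} {x : V} (hx : ∀ z, ¬ A x z) :
    IsSemiKernel A {x} := by
  refine ⟨singleton_nonempty x, ?_, ?_⟩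
  · rintro _ rfl _ rfl
    exact hx _
  · rintro _ rfl z hz
    exact absurd hz (hx z)

namespace IsSemiGrundy

variable {V : Type*} {A : V → V → Prop} {s : V → ℕ} {f : V → V} {C : Set V}

theorem apply_apply_eq_of_le (hs : IsSemiGrundy A s) (hC : MapsTo f C C)
    (hA : ∀ y ∈ C, ∀ z, A y z ↔ z = f y) {w : V} (hw : w ∈ C) (hle : s w ≤ s (f w)) :
    s (f (f w)) = s w := by
  have harc : A w (f w) := (hA w hw _).2 rfl
  have hlt : s w < s (f w) := lt_of_le_of_ne hle (hs.1 w (f w) harc).symm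
  obtain ⟨z, hz, hsz⟩ := hs.2 w (f w) harc hlt
  rwa [(hA (f w) (hC hw) z).1 hz] at hsz

theorem false_of_isPeriodicPt_odd (hs : IsSemiGrundy A s) (hC : MapsTo f C C)
    (hA : ∀ y ∈ C, ∀ z, A y z ↔ z = f y) {x : V} (hx : x ∈ C) {n : ℕ} (hn : Odd n)
    (hper : IsPeriodicPt f n x) : False := by
  set k₀ := argmin (fun k => s (f^[k] x))
  set y := f^[k₀] x
  have hmin : ∀ k, s y ≤ s (f^[k] y) := fun k => by
    rw [← iterate_add_apply]
    exact argmin_le (fun k => s (f^[k] x)) _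
  have heven : ∀ j, s (f^[2 * j] y) = s y := by
    intro j
    induction j with
    | zero => rfl
    | succ j ih =>
      have hmem : f^[2 * j] y ∈ C := hC.iterate _ (hC.iterate _ hx)
      have hle : s (f^[2 * j] y) ≤ s (f (f^[2 * j] y)) := by
        rw [ih, ← iterate_succ_apply' f]
        exact hmin _
      rw [show 2 * (j + 1) = 2 * j + 1 + 1 by ring, iterate_succ_apply', iterate_succ_apply',
        hs.apply_apply_eq_of_le hC hA hmem hle, ih]
  obtain ⟨j, rfl⟩ := hn
  have hwrap : f^[2 * (j + 1)] y = f y := by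
    rw [show 2 * (j + 1) = 1 + (2 * j + 1) by ring, iterate_add_apply,
      (hper.apply_iterate k₀).eq, iterate_one]
  have hy : y ∈ C := hC.iterate _ hx
  exact hs.1 y (f y) ((hA y hy _).2 rfl) (hwrap ▸ heven (j + 1))

end IsSemiGrundy

theorem exists_digraph_semiKernel_no_semiGrundy :
    ∃ (k : ℕ) (A : Fin k → Fin k → Prop),
      (∃ S : Set (Fin k), IsSemiKernel A S) ∧
        ∀ s : Fin k → ℕ, ¬ IsSemiGrundy A s := by
  let f : Fin 4 → Fin 4 := ![1, 2, 0, 3]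
  refine ⟨4, fun x y => x ≠ 3 ∧ y = f x, ⟨{3}, isSemiKernel_singleton (by simp)⟩, ?_⟩
  intro s hs
  exact hs.false_of_isPeriodicPt_odd (C := {3}ᶜ) (x := 0) (n := 3)
    (fun y hy => by fin_cases y <;> simp_all [f]) (fun y hy z => and_iff_right hy) (by decide)
    (by decide) (by decide)
end
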